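/- arXiv:1111.0957 — 2 statements merged into one kernel-verified Lean document; each statement's English description precedes it below -/
import Mathlib

section
/- A finitely generated module M over the polynomial ring R = k[x₁,…,x_r] is a second syzygy if and only if M is reflexive, i.e. the canonical evaluation map M → Hom_R(Hom_R(M,R),R) is an isomorphism. -/
/-- `IsSyzygy R j M` means `M` is a `j`-th syzygy over `R`: there is an exact sequence
`0 → M → F¹ → ⋯ → F^j` of `R`-modules with each `Fⁱ` finitely generated and free
(every finitely generated free module is isomorphic to some `Fin n → R`).
Equivalently (and this is the form used here), either `j = 0` (no condition), or `M`
embeds into a finitely generated free module `F¹` in such a way that the quotient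
`F¹ ⧸ M` is a `(j−1)`-st syzygy; this is exactness at `F¹`, and so on inductively. -/
def IsSyzygy (R : Type) [CommRing R] :
    (j : ℕ) → (M : Type) → [AddCommGroup M] → [Module R M] → Prop
  | 0, _M, _, _ => True
  | (j+1), M, _, _ =>
      ∃ (n : ℕ) (f : M →ₗ[R] (Fin n → R)), Function.Injective f ∧
        IsSyzygy R j ((Fin n → R) ⧸ LinearMap.range f)

open Module LinearMap

/-- Over a domain, any functional on a module embedded in a finite free module extends,
up to a nonzero scalar multiple, to a functional on the free module. -/
lemma extend_exists (R : Type) [CommRing R] [IsDomain R] (n : ℕ) :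
    ∀ (M : Type) [AddCommGroup M] [Module R M]
      (f : M →ₗ[R] (Fin n → R)) (_ : Function.Injective f) (ψ : M →ₗ[R] R),
      ∃ a : R, a ≠ 0 ∧ ∃ α : (Fin n → R) →ₗ[R] R, α ∘ₗ f = a • ψ := by
  induction n with
  | zero =>
    intro M _ _ f hf ψ
    refine ⟨1, one_ne_zero, 0, ?_⟩
    ext m
    have : m = 0 := hf (by ext i; exact i.elim0)
    simp [this]
  | succ n ih =>
    intro M _ _ f hf ψ
    set π : M →ₗ[R] R := (LinearMap.proj (Fin.last n)) ∘ₗ f with hπdef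
    set res : (Fin (n+1) → R) →ₗ[R] (Fin n → R) := LinearMap.funLeft R R Fin.castSucc with hres
    by_cases hcase : ∃ u : M, π u ≠ 0
    · obtain ⟨u, hu⟩ := hcase
      set a : R := π u with ha
      -- submodule ker π
      set f'' : (LinearMap.ker π) →ₗ[R] (Fin n → R) := res ∘ₗ f ∘ₗ (LinearMap.ker π).subtype with hf''
      have hf''inj : Function.Injective f'' := by
        intro x y hxy
        apply Subtype.ext
        apply hf
        funext i
        refine Fin.lastCases ?_ ?_ i
        · exact (LinearMap.mem_ker.mp x.2).trans (LinearMap.mem_ker.mp y.2).symm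
        · intro j
          have := congrFun hxy j
          simpa [hf'', hres, LinearMap.funLeft] using this
      obtain ⟨b, hb, β, hβ⟩ := ih (LinearMap.ker π) f'' hf''inj (ψ ∘ₗ (LinearMap.ker π).subtype)
      refine ⟨a * b, mul_ne_zero hu hb, ?_⟩
      refine ⟨β ∘ₗ res ∘ₗ (a • LinearMap.id - (LinearMap.proj (Fin.last n)).smulRight (f u))
          + (b * ψ u) • LinearMap.proj (Fin.last n), ?_⟩
      ext m
      have hmem : a • m - (π m) • u ∈ LinearMap.ker π := by
        simp [hπdef, ha, mul_comm, smul_eq_mul]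
      have hcalc : β (res (f (a • m - (π m) • u))) = b * (ψ (a • m - (π m) • u)) := by
        have := LinearMap.congr_fun hβ ⟨a • m - (π m) • u, hmem⟩
        simpa [hf'', smul_eq_mul] using this
      have harg : a • (f m) - (f m (Fin.last n)) • (f u) = f (a • m - (π m) • u) := by
        simp [hπdef, map_sub, map_smul]
      simp only [LinearMap.add_apply, LinearMap.comp_apply, LinearMap.sub_apply,
        LinearMap.smul_apply, LinearMap.id_apply, LinearMap.smulRight_apply,
        LinearMap.proj_apply, smul_eq_mul]
      rw [harg, hcalc]
      have : f m (Fin.last n) = π m := by simp [hπdef]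
      rw [this]
      simp only [map_sub, map_smul, smul_eq_mul]
      ring
    · push_neg at hcase
      have hf'inj : Function.Injective (res ∘ₗ f) := by
        intro x y hxy
        apply hf
        funext i
        refine Fin.lastCases ?_ ?_ i
        · exact (hcase x).trans (hcase y).symm
        · intro j
          have := congrFun hxy j
          simpa [hres, LinearMap.funLeft] using this
      obtain ⟨b, hb, β, hβ⟩ := ih M (res ∘ₗ f) hf'inj ψ
      exact ⟨b, hb, β ∘ₗ res, by rw [LinearMap.comp_assoc]; exact hβ⟩

/-- A second syzygy over a domain is reflexive. -/
lemma syzygy_to_reflexive (R : Type) [CommRing R] [IsDomain R]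
    (M : Type) [AddCommGroup M] [Module R M]
    (n : ℕ) (f : M →ₗ[R] (Fin n → R)) (hf : Function.Injective f)
    (m : ℕ) (h : ((Fin n → R) ⧸ LinearMap.range f) →ₗ[R] (Fin m → R))
    (hh : Function.Injective h) :
    Function.Bijective (Module.Dual.eval R M) := by
  classical
  constructor
  · -- injective
    rw [← LinearMap.ker_eq_bot, LinearMap.ker_eq_bot']
    intro x hx
    apply hf
    funext i
    have := LinearMap.congr_fun hx ((LinearMap.proj i : (Fin n → R) →ₗ[R] R) ∘ₗ f)
    simpa using this
  · -- surjective
    intro φ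
    set e : Fin n → (Fin n → R) := fun i j => if i = j then 1 else 0 with he
    set x : Fin n → R := fun i => φ ((LinearMap.proj i : (Fin n → R) →ₗ[R] R) ∘ₗ f) with hx
    have key : ∀ β : (Fin n → R) →ₗ[R] R, β x = φ (β ∘ₗ f) := by
      intro β
      have h1 : β ∘ₗ f = ∑ i, (β (e i)) • ((LinearMap.proj i : (Fin n → R) →ₗ[R] R) ∘ₗ f) := by
        ext mm
        rw [LinearMap.comp_apply]
        conv_lhs => rw [pi_eq_sum_univ (f mm), map_sum]
        rw [LinearMap.sum_apply]
        refine Finset.sum_congr rfl fun i _ => ?_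
        simp [he, smul_eq_mul, mul_comm]
      rw [h1, map_sum]
      conv_lhs => rw [pi_eq_sum_univ x, map_sum]
      refine Finset.sum_congr rfl fun i _ => ?_
      simp [he, hx, smul_eq_mul, mul_comm]
    have hmkQf : (LinearMap.range f).mkQ ∘ₗ f = 0 := by
      ext mm
      simpa [Submodule.Quotient.mk_eq_zero] using ⟨mm, rfl⟩
    have hx0 : h ((LinearMap.range f).mkQ x) = 0 := by
      funext j
      have hb := key ((LinearMap.proj j : (Fin m → R) →ₗ[R] R) ∘ₗ h ∘ₗ (LinearMap.range f).mkQ)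
      have hz : ((LinearMap.proj j : (Fin m → R) →ₗ[R] R) ∘ₗ h ∘ₗ (LinearMap.range f).mkQ) ∘ₗ f = 0 := by
        rw [LinearMap.comp_assoc, LinearMap.comp_assoc, hmkQf]
        simp
      rw [hz, map_zero] at hb
      simpa using hb
    have hx1 : (LinearMap.range f).mkQ x = 0 := hh (by simpa using hx0)
    have hx2 : x ∈ LinearMap.range f := by
      rwa [← Submodule.Quotient.mk_eq_zero]
    obtain ⟨m₀, hm₀⟩ := hx2
    refine ⟨m₀, ?_⟩
    ext ψ
    obtain ⟨a, ha, α, hα⟩ := extend_exists R n M f hf ψ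
    have h2 : α x = φ (α ∘ₗ f) := key α
    have l : α (f m₀) = a * ψ m₀ := by
      have := LinearMap.congr_fun hα m₀; simpa using this
    rw [← hm₀, l, hα] at h2
    simp only [map_smul, smul_eq_mul] at h2
    have : ψ m₀ = φ ψ := mul_left_cancel₀ ha h2
    simpa [Module.Dual.eval] using this

/-- A finitely generated reflexive module over a Noetherian ring is a second syzygy. -/
lemma reflexive_to_syzygy (R : Type) [CommRing R] [IsNoetherianRing R]
    (M : Type) [AddCommGroup M] [Module R M] [Module.Finite R M]
    (hbij : Function.Bijective (Module.Dual.eval R M)) :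
    ∃ (n : ℕ) (f : M →ₗ[R] (Fin n → R)), Function.Injective f ∧
      ∃ (m : ℕ) (h : ((Fin n → R) ⧸ LinearMap.range f) →ₗ[R] (Fin m → R)),
        Function.Injective h := by
  classical
  -- Dual M is finitely generated
  obtain ⟨c, s, hs⟩ := Module.Finite.exists_fin' R M
  have hsd : Function.Injective s.dualMap := LinearMap.dualMap_injective_of_surjective hs
  let ec := (Pi.basisFun R (Fin c)).toDualEquiv
  haveI : Module.Finite R (Module.Dual R M) :=
    Module.Finite.of_injective (ec.symm.toLinearMap ∘ₗ s.dualMap)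
      (ec.symm.injective.comp hsd)
  obtain ⟨a, p, hp⟩ := Module.Finite.exists_fin' R (Module.Dual R M)
  let e := (Pi.basisFun R (Fin a)).toDualEquiv
  let f : M →ₗ[R] (Fin a → R) := e.symm.toLinearMap ∘ₗ p.dualMap ∘ₗ (Module.Dual.eval R M)
  have hpd : Function.Injective p.dualMap := LinearMap.dualMap_injective_of_surjective hp
  have hf : Function.Injective f := e.symm.injective.comp (hpd.comp hbij.1)
  set Kp := LinearMap.ker p with hKp
  haveI : Module.Finite R Kp := Module.Finite.of_injective Kp.subtype Kp.injective_subtype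
  obtain ⟨b, q, hq⟩ := Module.Finite.exists_fin' R Kp
  let eb := (Pi.basisFun R (Fin b)).toDualEquiv
  let δ : (Fin a → R) →ₗ[R] (Fin b → R) :=
    eb.symm.toLinearMap ∘ₗ q.dualMap ∘ₗ Kp.subtype.dualMap ∘ₗ e.toLinearMap
  have hqd : Function.Injective q.dualMap := LinearMap.dualMap_injective_of_surjective hq
  have hrange : ∀ y, δ y = 0 ↔ y ∈ LinearMap.range f := by
    intro y
    constructor
    · intro hy
      have h1 : Kp.subtype.dualMap (e y) = 0 := by
        apply hqd
        rw [map_zero]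
        apply eb.symm.injective
        rw [map_zero]
        exact hy
      have hle : Kp ≤ LinearMap.ker (e y) := by
        intro z hz
        have := LinearMap.congr_fun h1 ⟨z, hz⟩
        simpa using this
      let eq := p.quotKerEquivOfSurjective hp
      let φ : Module.Dual R (Module.Dual R M) :=
        (Kp.liftQ (e y) hle) ∘ₗ eq.symm.toLinearMap
      have hφ : ∀ z, φ (p z) = e y z := by
        intro z
        have h2 : eq.symm (p z) = Submodule.Quotient.mk z := by
          rw [LinearEquiv.symm_apply_eq]
          rfl
        show (Kp.liftQ (e y) hle) (eq.symm (p z)) = e y z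
        rw [h2]
        rfl
      obtain ⟨mm, hmm⟩ := hbij.2 φ
      refine ⟨mm, ?_⟩
      have h3 : p.dualMap (Module.Dual.eval R M mm) = e y := by
        rw [hmm]
        refine LinearMap.ext fun z => ?_
        exact hφ z
      show e.symm (p.dualMap (Module.Dual.eval R M mm)) = y
      rw [h3, LinearEquiv.symm_apply_apply]
    · rintro ⟨mm, rfl⟩
      have h4 : e (f mm) = p.dualMap (Module.Dual.eval R M mm) :=
        e.apply_symm_apply _
      have h5 : Kp.subtype.dualMap (e (f mm)) = 0 := by
        rw [h4]
        ext z
        have hz : p (z : Fin a → R) = 0 := z.2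
        simp [LinearMap.dualMap_apply, hz]
      show eb.symm (q.dualMap (Kp.subtype.dualMap (e (f mm)))) = 0
      rw [h5, map_zero, map_zero]
  refine ⟨a, f, hf, b, (LinearMap.range f).liftQ δ (fun y hy => (hrange y).2 hy), ?_⟩
  rw [← LinearMap.ker_eq_bot]
  exact Submodule.ker_liftQ_eq_bot _ _ _ (fun y hy => (hrange y).1 hy)

/-!
STATEMENT 9: A finitely generated module `M` over the polynomial ring `R = k[x₁,…,x_r]`
is a second syzygy if and only if `M` is reflexive, i.e. the canonical evaluation map
`M → Hom_R(Hom_R(M,R),R)` is an isomorphism.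
-/

theorem stmt9 (k : Type) [Field k] (r : ℕ) (hr : 1 ≤ r)
    (M : Type) [AddCommGroup M] [Module (MvPolynomial (Fin r) k) M]
    [Module.Finite (MvPolynomial (Fin r) k) M] :
    IsSyzygy (MvPolynomial (Fin r) k) 2 M ↔
      Function.Bijective (Module.Dual.eval (MvPolynomial (Fin r) k) M) := by
  set R := MvPolynomial (Fin r) k
  have unfold : IsSyzygy R 2 M ↔
      ∃ (n : ℕ) (f : M →ₗ[R] (Fin n → R)), Function.Injective f ∧
        ∃ (m : ℕ) (h : ((Fin n → R) ⧸ LinearMap.range f) →ₗ[R] (Fin m → R)),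
          Function.Injective h ∧ True := Iff.rfl
  rw [unfold]
  constructor
  · rintro ⟨n, f, hf, m, h, hh, -⟩
    exact syzygy_to_reflexive R M n f hf m h hh
  · intro hbij
    obtain ⟨n, f, hf, m, h, hh⟩ := reflexive_to_syzygy R M hbij
    exact ⟨n, f, hf, m, h, hh, trivial⟩
end

section
/- The Stanley–Reisner ring A = k[u₁,…,u_r,v₁,…,v_r]/(u₁v₁,…,u_rv_r), regarded as a module over the polynomial ring R = k[x₁,…,x_r] via the k-algebra homomorphism sending x_i to u_i − v_i, is a free R-module with basis the images of the 2^r square-free monomials u_I = ∏_{i∈I} u_i, I ⊆ {1,…,r}; in particular A ≅ R^{2^r} as R-modules. -/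
/-- The ideal `(u₁v₁,…,u_rv_r)` of `k[u₁,…,u_r,v₁,…,v_r]`, where the `u`-variables are
indexed by `Sum.inl` and the `v`-variables by `Sum.inr`. -/
noncomputable def srIdeal (k : Type) [Field k] (r : ℕ) :
    Ideal (MvPolynomial (Fin r ⊕ Fin r) k) :=
  Ideal.span (Set.range fun i : Fin r =>
    MvPolynomial.X (Sum.inl i) * MvPolynomial.X (Sum.inr i))

/-- The Stanley–Reisner ring `A = k[u₁,…,u_r,v₁,…,v_r]/(u₁v₁,…,u_rv_r)`. -/
abbrev SRRing (k : Type) [Field k] (r : ℕ) : Type :=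
  MvPolynomial (Fin r ⊕ Fin r) k ⧸ srIdeal k r

/-- The `k`-algebra homomorphism `R = k[x₁,…,x_r] → A` sending `x_i ↦ u_i − v_i`. -/
noncomputable def srStructureMap (k : Type) [Field k] (r : ℕ) :
    MvPolynomial (Fin r) k →ₐ[k] SRRing k r :=
  MvPolynomial.aeval fun i =>
    Ideal.Quotient.mk (srIdeal k r) (MvPolynomial.X (Sum.inl i)) -
      Ideal.Quotient.mk (srIdeal k r) (MvPolynomial.X (Sum.inr i))

/-- `A` is an `R`-algebra (in particular an `R`-module) via `x_i ↦ u_i − v_i`. -/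
noncomputable instance (k : Type) [Field k] (r : ℕ) :
    Algebra (MvPolynomial (Fin r) k) (SRRing k r) :=
  (srStructureMap k r).toRingHom.toAlgebra

/-!
STATEMENT 16: The Stanley–Reisner ring `A = k[u,v]/(u₁v₁,…,u_rv_r)`, regarded as a
module over `R = k[x₁,…,x_r]` via `x_i ↦ u_i − v_i`, is a free `R`-module with basis
the images of the `2^r` square-free monomials `u_I = ∏_{i∈I} u_i`, `I ⊆ {1,…,r}`;
in particular `A ≅ R^{2^r}` as `R`-modules.
-/

set_option synthInstance.maxHeartbeats 400000

/-!
`Spec A` is the union of the `2^r` coordinate `r`-planes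
`L_J = {u_i = 0 for i ∉ J, v_i = 0 for i ∈ J}`, and `x = u − v` identifies each of them with
affine `r`-space. Restriction to `L_J` is therefore an `R`-linear retraction `A → R`; it sends
`u_I` to `x_I` if `I ⊆ J` and to `0` otherwise, and this triangularity makes the `u_I` linearly
independent. They span because `u_i v_i = 0`: multiplying `u_I` by `u_i` or by `v_i = u_i − x_i`
stays in their `R`-span.
-/

theorem linearIndependent_of_triangular {R M ι : Type*} [Ring R] [NoZeroDivisors R]
    [AddCommGroup M] [Module R M] [PartialOrder ι] [WellFoundedLT ι] {v : ι → M}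
    (f : ι → M →ₗ[R] R) (hf : ∀ i j, ¬i ≤ j → f j (v i) = 0)
    (hdiag : ∀ i, f i (v i) ≠ 0) :
    LinearIndependent R v := by
  rw [linearIndependent_iff]
  intro l hl
  suffices ∀ j, l j = 0 from Finsupp.ext this
  intro j
  induction j using WellFoundedLT.induction with
  | _ j ih =>
    have hj := congrArg (f j) hl
    rw [Finsupp.linearCombination_apply, map_finsuppSum, map_zero,
      Finsupp.sum_eq_single j (fun i _ hij => ?_) (fun _ => by rw [zero_smul, map_zero]),
      map_smul, smul_eq_mul] at hj
    · exact (mul_eq_zero.mp hj).resolve_right (hdiag j)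
    · by_cases hle : i ≤ j
      · rw [ih i (lt_of_le_of_ne hle hij), zero_smul, map_zero]
      · rw [map_smul, hf i j hle, smul_zero]

namespace SRRing

open MvPolynomial

variable (k : Type) [Field k] (r : ℕ)

noncomputable abbrev u (i : Fin r) : SRRing k r :=
  Ideal.Quotient.mk (srIdeal k r) (X (Sum.inl i))

noncomputable abbrev v (i : Fin r) : SRRing k r :=
  Ideal.Quotient.mk (srIdeal k r) (X (Sum.inr i))

noncomputable def uProd (s : Finset (Fin r)) : SRRing k r :=
  Ideal.Quotient.mk (srIdeal k r) (∏ i ∈ s, X (Sum.inl i))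

variable {k r}

theorem smul_def (p : MvPolynomial (Fin r) k) (a : SRRing k r) :
    p • a = srStructureMap k r p * a := rfl

theorem srStructureMap_X (i : Fin r) : srStructureMap k r (X i) = u k r i - v k r i :=
  aeval_X _ i

theorem uProd_empty : uProd k r ∅ = 1 := by
  rw [uProd, Finset.prod_empty, map_one]

theorem u_mul_uProd_of_notMem {i : Fin r} {s : Finset (Fin r)} (hi : i ∉ s) :
    u k r i * uProd k r s = uProd k r (insert i s) := by
  rw [uProd, uProd, ← map_mul, Finset.prod_insert hi]

theorem v_mul_uProd_of_mem {i : Fin r} {s : Finset (Fin r)} (hi : i ∈ s) :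
    v k r i * uProd k r s = 0 := by
  rw [uProd, ← map_mul, ← Finset.mul_prod_erase s _ hi, ← mul_assoc, mul_comm (X _),
    Ideal.Quotient.eq_zero_iff_mem]
  exact Ideal.mul_mem_right _ _ (Ideal.subset_span ⟨i, rfl⟩)

theorem u_mul_uProd_of_mem {i : Fin r} {s : Finset (Fin r)} (hi : i ∈ s) :
    u k r i * uProd k r s = (X i : MvPolynomial (Fin r) k) • uProd k r s := by
  rw [smul_def, srStructureMap_X, sub_mul, v_mul_uProd_of_mem hi, sub_zero]

theorem v_mul_uProd_of_notMem {i : Fin r} {s : Finset (Fin r)} (hi : i ∉ s) :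
    v k r i * uProd k r s =
      uProd k r (insert i s) - (X i : MvPolynomial (Fin r) k) • uProd k r s := by
  rw [smul_def, srStructureMap_X, ← u_mul_uProd_of_notMem hi]
  ring

theorem mk_X_mul_uProd_mem_span (j : Fin r ⊕ Fin r) (s : Finset (Fin r)) :
    Ideal.Quotient.mk (srIdeal k r) (X j) * uProd k r s ∈
      Submodule.span (MvPolynomial (Fin r) k) (Set.range (uProd k r)) := by
  have mem (t : Finset (Fin r)) := Submodule.subset_span (R := MvPolynomial (Fin r) k)
    (Set.mem_range_self (f := uProd k r) t)
  rcases j with i | i <;> by_cases hi : i ∈ s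
  · rw [u_mul_uProd_of_mem hi]
    exact Submodule.smul_mem _ _ (mem s)
  · rw [u_mul_uProd_of_notMem hi]
    exact mem _
  · rw [v_mul_uProd_of_mem hi]
    exact Submodule.zero_mem _
  · rw [v_mul_uProd_of_notMem hi]
    exact Submodule.sub_mem _ (mem _) (Submodule.smul_mem _ _ (mem s))

theorem span_uProd_eq_top :
    Submodule.span (MvPolynomial (Fin r) k) (Set.range (uProd k r)) = ⊤ := by
  set S := Submodule.span (MvPolynomial (Fin r) k) (Set.range (uProd k r))
  have mul_mk_X_mem (j : Fin r ⊕ Fin r) {a : SRRing k r} (ha : a ∈ S) :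
      a * Ideal.Quotient.mk (srIdeal k r) (X j) ∈ S := by
    induction ha using Submodule.span_induction with
    | mem _ h =>
      obtain ⟨s, rfl⟩ := h
      rw [mul_comm]
      exact mk_X_mul_uProd_mem_span j s
    | zero => rw [zero_mul]; exact S.zero_mem
    | add _ _ _ _ ha hb => rw [add_mul]; exact S.add_mem ha hb
    | smul p _ _ ha => rw [smul_mul_assoc]; exact S.smul_mem p ha
  rw [eq_top_iff]
  rintro a -
  obtain ⟨p, rfl⟩ := Ideal.Quotient.mk_surjective a
  induction p using MvPolynomial.induction_on with
  | C c =>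
    have hC : Ideal.Quotient.mk (srIdeal k r) (C c) =
        (C c : MvPolynomial (Fin r) k) • uProd k r ∅ := by
      rw [smul_def, uProd_empty, mul_one, srStructureMap, aeval_C, ← Ideal.Quotient.mk_algebraMap]
      rfl
    rw [hC]
    exact S.smul_mem _ (Submodule.subset_span ⟨∅, rfl⟩)
  | add p q hp hq => rw [map_add]; exact S.add_mem hp hq
  | mul_X p j hp => rw [map_mul]; exact mul_mk_X_mem j hp


theorem uProd_eq_prod (s : Finset (Fin r)) : uProd k r s = ∏ i ∈ s, u k r i :=
  map_prod _ _ _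

variable (k r) in
noncomputable def componentEval (J : Finset (Fin r)) :
    MvPolynomial (Fin r ⊕ Fin r) k →ₐ[k] MvPolynomial (Fin r) k :=
  aeval (Sum.elim (fun i => if i ∈ J then X i else 0) (fun i => if i ∈ J then 0 else -X i))

theorem srIdeal_le_ker_componentEval (J : Finset (Fin r)) :
    srIdeal k r ≤ RingHom.ker (componentEval k r J) := by
  refine Ideal.span_le.mpr ?_
  rintro _ ⟨i, rfl⟩
  by_cases hi : i ∈ J <;> simp [componentEval, hi]

variable (k r) in
noncomputable def toComponent (J : Finset (Fin r)) : SRRing k r →ₐ[k] MvPolynomial (Fin r) k :=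
  Ideal.Quotient.liftₐ (srIdeal k r) (componentEval k r J)
    fun _ ha => RingHom.mem_ker.mp (srIdeal_le_ker_componentEval J ha)

theorem toComponent_mk (J : Finset (Fin r)) (p : MvPolynomial (Fin r ⊕ Fin r) k) :
    toComponent k r J (Ideal.Quotient.mk (srIdeal k r) p) = componentEval k r J p :=
  Ideal.Quotient.lift_mk _ _ _

theorem toComponent_u (J : Finset (Fin r)) (i : Fin r) :
    toComponent k r J (u k r i) = if i ∈ J then X i else 0 := by
  simp [toComponent_mk, componentEval]

theorem toComponent_v (J : Finset (Fin r)) (i : Fin r) :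
    toComponent k r J (v k r i) = if i ∈ J then 0 else -X i := by
  simp [toComponent_mk, componentEval]

theorem toComponent_srStructureMap (J : Finset (Fin r)) (p : MvPolynomial (Fin r) k) :
    toComponent k r J (srStructureMap k r p) = p := by
  have h : (toComponent k r J).comp (srStructureMap k r) = AlgHom.id k _ :=
    algHom_ext fun i => by
      rw [AlgHom.comp_apply, srStructureMap_X, map_sub, toComponent_u, toComponent_v,
        AlgHom.id_apply]
      split_ifs <;> ring
  exact AlgHom.congr_fun h p

variable (k r) in
noncomputable def componentRetraction (J : Finset (Fin r)) :
    SRRing k r →ₗ[MvPolynomial (Fin r) k] MvPolynomial (Fin r) k where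
  toFun := toComponent k r J
  map_add' := map_add _
  map_smul' p a := by
    rw [smul_def, map_mul, toComponent_srStructureMap, RingHom.id_apply, smul_eq_mul]

theorem componentRetraction_apply (J : Finset (Fin r)) (a : SRRing k r) :
    componentRetraction k r J a = toComponent k r J a := rfl

theorem componentRetraction_uProd (J s : Finset (Fin r)) :
    componentRetraction k r J (uProd k r s) = if s ⊆ J then ∏ i ∈ s, X i else 0 := by
  rw [componentRetraction_apply, uProd_eq_prod, map_prod]
  split_ifs with hs
  · exact Finset.prod_congr rfl fun i hi => by rw [toComponent_u, if_pos (hs hi)]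
  · obtain ⟨i, hi, hiJ⟩ := Finset.not_subset.mp hs
    exact Finset.prod_eq_zero hi (by rw [toComponent_u, if_neg hiJ])

theorem linearIndependent_uProd : LinearIndependent (MvPolynomial (Fin r) k) (uProd k r) :=
  linearIndependent_of_triangular (componentRetraction k r)
    (fun s J hs => by rw [componentRetraction_uProd, if_neg hs])
    (fun s => by
      rw [componentRetraction_uProd, if_pos le_rfl]
      exact Finset.prod_ne_zero_iff.mpr fun i _ => X_ne_zero i)

variable (k r) in
noncomputable def uProdBasis :
    Module.Basis (Finset (Fin r)) (MvPolynomial (Fin r) k) (SRRing k r) :=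
  .mk linearIndependent_uProd span_uProd_eq_top.ge

theorem uProdBasis_apply (s : Finset (Fin r)) : uProdBasis k r s = uProd k r s :=
  Module.Basis.mk_apply _ _ _

end SRRing

theorem stmt16_general (k : Type) [Field k] (r : ℕ) :
    (∃ B : Module.Basis (Finset (Fin r)) (MvPolynomial (Fin r) k) (SRRing k r),
      ∀ s : Finset (Fin r),
        B s = Ideal.Quotient.mk (srIdeal k r)
          (∏ i ∈ s, MvPolynomial.X (Sum.inl i))) ∧
    Nonempty (SRRing k r ≃ₗ[MvPolynomial (Fin r) k]
      (Fin (2 ^ r) → MvPolynomial (Fin r) k)) := by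
  have e : Finset (Fin r) ≃ Fin (2 ^ r) := Fintype.equivFinOfCardEq (by simp)
  exact ⟨⟨SRRing.uProdBasis k r, SRRing.uProdBasis_apply⟩,
    ⟨((SRRing.uProdBasis k r).reindex e).equivFun⟩⟩

theorem stmt16 (k : Type) [Field k] (r : ℕ) (hr : 1 ≤ r) :
    (∃ B : Module.Basis (Finset (Fin r)) (MvPolynomial (Fin r) k) (SRRing k r),
      ∀ s : Finset (Fin r),
        B s = Ideal.Quotient.mk (srIdeal k r)
          (∏ i ∈ s, MvPolynomial.X (Sum.inl i))) ∧
    Nonempty (SRRing k r ≃ₗ[MvPolynomial (Fin r) k]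
      (Fin (2 ^ r) → MvPolynomial (Fin r) k)) :=
  stmt16_general k r
end
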